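/- Let p be a nonzero real number and n ≥ 0 an integer. A polynomial f ∈ ℝ[X] satisfies f^{(k)}(p) = (−1)^k f^{(k)}(−p) for all 0 ≤ k ≤ n−1 if and only if there exist even polynomials g, h ∈ ℝ[X] (i.e. g(−X) = g(X) and h(−X) = h(X)) such that f(X) = g(X) + X·(X² − p²)^n · h(X). In other words, the space of polynomials with f^{(k)}(p) − (−1)^k f^{(k)}(−p) = 0 for 0 ≤ k ≤ n−1 equals span{1, X², X⁴, ...} ⊕ X(X² − p²)^n · span{1, X², X⁴, ...}. -/
import Mathlib

open Polynomial

private lemma iter_deriv_comp_neg (f : Polynomial ℝ) (k : ℕ) :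
    derivative^[k] (f.comp (-X)) = C ((-1 : ℝ) ^ k) * (derivative^[k] f).comp (-X) := by
  induction k with
  | zero => simp
  | succ k ih =>
    rw [Function.iterate_succ_apply', ih, derivative_C_mul, derivative_comp,
      Function.iterate_succ_apply']
    simp [pow_succ]

private lemma eval_iter_deriv_comp_neg (f : Polynomial ℝ) (k : ℕ) (a : ℝ) :
    (derivative^[k] (f.comp (-X))).eval a = (-1) ^ k * (derivative^[k] f).eval (-a) := by
  rw [iter_deriv_comp_neg]
  simp [eval_comp]

private lemma pow_dvd_iff_eval (q : Polynomial ℝ) (a : ℝ) (n : ℕ) :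
    (X - C a) ^ n ∣ q ↔ ∀ k < n, (derivative^[k] q).eval a = 0 := by
  by_cases hq : q = 0
  · simp [hq]
  rw [← le_rootMultiplicity_iff hq]
  cases n with
  | zero => simp
  | succ m =>
    rw [Nat.succ_le_iff, lt_rootMultiplicity_iff_isRoot_iterate_derivative hq]
    constructor
    · intro h k hk; exact h k (Nat.lt_succ_iff.mp hk)
    · intro h k hk; exact h k (Nat.lt_succ_iff.mpr hk)

/-- the Grassmannian plane `Wₙ` in the discrete KdV example: for a
nonzero real `p` and `n ≥ 0`, a polynomial `f` satisfies
`f⁽ᵏ⁾(p) = (-1)^k f⁽ᵏ⁾(-p)` for all `0 ≤ k ≤ n-1` if and only if there exist even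
polynomials `g`, `h` with `f = g + X (X² - p²)^n h`; i.e. the space of such `f`
is `span {1, X², X⁴, ...} ⊕ X (X² - p²)^n span {1, X², X⁴, ...}`. -/
theorem kdv_flag_characterization
    (p : ℝ) (hp : p ≠ 0) (n : ℕ) (f : Polynomial ℝ) :
    (∀ k : ℕ, k < n →
        (derivative^[k] f).eval p = (-1) ^ k * (derivative^[k] f).eval (-p))
      ↔ ∃ g h : Polynomial ℝ,
          g.comp (-X) = g ∧ h.comp (-X) = h ∧
            f = g + X * (X ^ 2 - C (p ^ 2)) ^ n * h := by
  have hfactor : (X - C p) * (X + C p) = X ^ 2 - C (p ^ 2) := by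
    rw [C_pow]; ring
  set d : Polynomial ℝ := f - f.comp (-X) with hd
  have hdeval : ∀ k : ℕ, (derivative^[k] d).eval p
      = (derivative^[k] f).eval p - (-1) ^ k * (derivative^[k] f).eval (-p) := by
    intro k
    have : derivative^[k] d = derivative^[k] f - derivative^[k] (f.comp (-X)) := by
      simp [hd]
    rw [this, eval_sub, eval_iter_deriv_comp_neg]
  have hcond : (∀ k : ℕ, k < n →
      (derivative^[k] f).eval p = (-1) ^ k * (derivative^[k] f).eval (-p))
      ↔ (X - C p) ^ n ∣ d := by
    rw [pow_dvd_iff_eval]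
    constructor
    · intro h k hk; rw [hdeval, h k hk]; ring
    · intro h k hk; have := h k hk; rw [hdeval] at this; linarith
  have hdodd : d.comp (-X) = -d := by
    simp only [hd, sub_comp, comp_assoc, neg_comp, X_comp, neg_neg, comp_X]
    ring
  rw [hcond]
  constructor
  · intro hdvd
    -- also `(X + C p)^n` divides `d`
    obtain ⟨c, hc⟩ := hdvd
    have key : -d = (X + C p) ^ n * ((-1) ^ n * c.comp (-X)) := by
      rw [← hdodd, hc, mul_comp, pow_comp, sub_comp, X_comp, C_comp,
        show (-X - C p : Polynomial ℝ) = -(X + C p) by ring, neg_pow]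
      ring
    have hdvd2 : (X + C p) ^ n ∣ d :=
      dvd_neg.mp (Dvd.intro _ key.symm)
    have hcop : IsCoprime ((X - C p) ^ n) ((X + C p) ^ n) := by
      apply IsCoprime.pow
      have hu : IsUnit (p - -p) := isUnit_iff_ne_zero.mpr (by
        intro h; apply hp; linarith)
      have := isCoprime_X_sub_C_of_isUnit_sub hu
      simpa [sub_neg_eq_add, map_neg] using this
    obtain ⟨r, hr⟩ := hcop.mul_dvd ⟨c, hc⟩ hdvd2
    rw [← mul_pow, hfactor] at hr
    set E : Polynomial ℝ := C (1 / 2 : ℝ) * (f + f.comp (-X)) with hE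
    set s : Polynomial ℝ := C (1 / 2 : ℝ) * r with hs
    have hq0 : (X ^ 2 - C (p ^ 2) : Polynomial ℝ) ^ n ≠ 0 := by
      apply pow_ne_zero
      intro h
      have := congrArg (Polynomial.eval 0) h
      simp at this
      exact hp this
    have hds : C (1 / 2 : ℝ) * d = (X ^ 2 - C (p ^ 2)) ^ n * s := by
      rw [hr, hs]; ring
    have hsodd : s.comp (-X) = -s := by
      have h1 : ((X ^ 2 - C (p ^ 2) : Polynomial ℝ) ^ n).comp (-X)
          = (X ^ 2 - C (p ^ 2)) ^ n := by
        rw [pow_comp, sub_comp, pow_comp, X_comp, C_comp]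
        ring_nf
      have h3 : (C (1 / 2 : ℝ) * d).comp (-X) = -(C (1 / 2 : ℝ) * d) := by
        rw [mul_comp, C_comp, hdodd]; ring
      rw [hds, mul_comp, h1] at h3
      have h2 : (X ^ 2 - C (p ^ 2)) ^ n * s.comp (-X)
          = (X ^ 2 - C (p ^ 2)) ^ n * (-s) := by
        rw [h3]; ring
      exact mul_left_cancel₀ hq0 h2
    have hs0 : s.coeff 0 = 0 := by
      have := congrArg (Polynomial.eval 0) hsodd
      simp [eval_comp] at this
      rw [coeff_zero_eq_eval_zero]
      linarith
    obtain ⟨h, hh⟩ : X ∣ s := X_dvd_iff.mpr hs0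
    have hheven : h.comp (-X) = h := by
      have h3 := hsodd
      rw [hh, mul_comp, X_comp] at h3
      have h2 : -X * h.comp (-X) = -X * h := by rw [h3]; ring
      have hX : (-X : Polynomial ℝ) ≠ 0 := by
        simp [X_ne_zero]
      exact mul_left_cancel₀ hX h2
    refine ⟨E, h, ?_, hheven, ?_⟩
    · rw [hE, mul_comp, C_comp, add_comp, comp_assoc]
      simp only [neg_comp, X_comp, neg_neg, comp_X]
      ring
    · have e1 : X * (X ^ 2 - C (p ^ 2)) ^ n * h = C (1 / 2 : ℝ) * d := by
        rw [hds, hh]; ring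
      rw [e1, hE, hd]
      have half : (C (1 / 2 : ℝ) + C (1 / 2 : ℝ) : Polynomial ℝ) = 1 := by
        rw [← C_add]; norm_num
      linear_combination (-f : Polynomial ℝ) * half
  · rintro ⟨g, h, hg, hh, rfl⟩
    have e0 : (X - C p) ^ n * (X + C p) ^ n = (X ^ 2 - C (p ^ 2)) ^ n := by
      rw [← mul_pow, hfactor]
    have e : d = (X - C p) ^ n * ((X + C p) ^ n * (2 * X * h)) := by
      simp only [hd, add_comp, mul_comp, pow_comp, sub_comp, X_comp, C_comp, neg_comp,
        hg, hh]
      linear_combination (-(2 * X * h) : Polynomial ℝ) * e0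
    exact Dvd.intro _ e.symm
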